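/- Small support, part (c): Let n ∈ ℤ≥0, let N ∈ ℤ>0, let b ∈ [N/(N+1), 2N/(2N+1)), and let g ∈ V^n₊(ℝ) be even. Define z : [0,1] → ℂ by z(x) = b·ψ(x)/g(x) for x ∈ [0, 1−N(1/b−1)], z(x) = z_mid(x) for x ∈ (1−N(1/b−1), N(1/b−1)), and z(x) = −b·ψ(x)/g(x−1) for x ∈ [N(1/b−1), 1], where z_mid : (1−N(1/b−1), N(1/b−1)) → ℂ is measurable. Then h_z is even (h_z(x) = h_z(−x) for a.e. x ∈ ℝ) if and only if z_mid is antisymmetric around x = 1/2, i.e., z_mid(x) = −z_mid(1−x) for a.e. x ∈ (1−N(1/b−1), 1/2]. -/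

import Mathlib

open MeasureTheory Filter Topology Set

noncomputable section

attribute [local instance] Classical.propDecidable

/-- `kmax b` is the largest nonnegative integer strictly smaller than `b/(1-b)`. -/
def kmax (b : ℝ) : ℕ := ⌈b / (1 - b)⌉₊ - 1

/-- The window class `V⁺ⁿ(ℝ)`: `Cⁿ` functions with support exactly `[-1,1]`,
nonvanishing on `(-1,1)`. -/
def Vplus (n : ℕ) (g : ℝ → ℂ) : Prop :=
  ContDiff ℝ n g ∧ tsupport g = Set.Icc (-1 : ℝ) 1 ∧ ∀ x ∈ Set.Ioo (-1 : ℝ) 1, g x ≠ 0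

/-- The `1`-periodic function `ψ(x) = 1 / ∑ₙ g(x+n)`. -/
def psiFun (g : ℝ → ℂ) (x : ℝ) : ℂ := 1 / ∑' n : ℤ, g (x + n)

/-- The auxiliary function `γ_k` (translated so that it is defined near `[k/b, k+1]`). -/
def gammaAux (b : ℝ) (g z : ℝ → ℂ) (k : ℕ) (x : ℝ) : ℂ :=
  (-1 : ℂ) ^ k *
    (∏ j ∈ Finset.Icc 1 k,
      g (x - k - 1 - j * (1 / b - 1)) / g (x - k - j * (1 / b - 1))) *
    (g (x - k - 1) * z (x - k) + (b : ℂ) * psiFun g (x - k))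

/-- The auxiliary function `η_k` (translated so that it is defined near `[-k-1, -k/b]`). -/
def etaAux (b : ℝ) (g z : ℝ → ℂ) (k : ℕ) (x : ℝ) : ℂ :=
  (-1 : ℂ) ^ k *
    (∏ j ∈ Finset.Icc 1 k,
      g (x + k + 1 + j * (1 / b - 1)) / g (x + k + j * (1 / b - 1))) *
    (-(g (x + k + 1) * z (x + k + 1)) + (b : ℂ) * psiFun g (x + k + 1))

/-- The dual window candidate `h_z`, defined piecewise (the pieces are pairwise disjoint). -/
def hz (b : ℝ) (g z : ℝ → ℂ) (x : ℝ) : ℂ :=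
  (starRingEnd ℂ)
    (if x ∈ Set.Ico (-1 : ℝ) 0 then etaAux b g z 0 x
     else if x ∈ Set.Icc (0 : ℝ) 1 then gammaAux b g z 0 x
     else if hk : ∃ k : ℕ, 1 ≤ k ∧ k ≤ kmax b ∧ x ∈ Set.Icc ((k : ℝ) / b) ((k : ℝ) + 1) then
       gammaAux b g z hk.choose x
     else if hk : ∃ k : ℕ, 1 ≤ k ∧ k ≤ kmax b ∧ x ∈ Set.Icc (-(k : ℝ) - 1) (-(k : ℝ) / b) then
       etaAux b g z hk.choose x
     else 0)

/-- The time–frequency shift `M_{bm} T_k w`. -/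
def timeFreqShift (b : ℝ) (m k : ℤ) (w : ℝ → ℂ) : ℝ → ℂ :=
  fun x => Complex.exp (2 * Real.pi * Complex.I * (b : ℂ) * (m : ℂ) * (x : ℂ)) * w (x - k)

/-- The Gabor coefficient `⟨f, M_{bm} T_k w⟩` in `L²(ℝ)`. -/
def gaborCoef (b : ℝ) (w f : ℝ → ℂ) (m k : ℤ) : ℂ :=
  ∫ x : ℝ, f x * (starRingEnd ℂ) (timeFreqShift b m k w x)

/-- The Gabor system `G(w,1,b)` is a Bessel system. -/
def GaborBessel (b : ℝ) (w : ℝ → ℂ) : Prop :=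
  MemLp w 2 (volume : Measure ℝ) ∧
  ∃ B > (0 : ℝ), ∀ f : ℝ → ℂ, MemLp f 2 (volume : Measure ℝ) →
    ∑' mk : ℤ × ℤ, ‖gaborCoef b w f mk.1 mk.2‖ ^ 2 ≤ B * ∫ x : ℝ, ‖f x‖ ^ 2

/-- `G(g,1,b)` and `G(h,1,b)` are dual frames: both Bessel, and every `f ∈ L²(ℝ)` has the
reconstruction `f = ∑_{m,k} ⟨f, M_{bm}T_k g⟩ M_{bm}T_k h` with unconditional `L²`-convergence. -/
def GaborDualFrames (b : ℝ) (g h : ℝ → ℂ) : Prop :=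
  GaborBessel b g ∧ GaborBessel b h ∧
  ∀ f : Lp ℂ 2 (volume : Measure ℝ),
    ∃ F : ℤ × ℤ → Lp ℂ 2 (volume : Measure ℝ),
      (∀ mk : ℤ × ℤ, (F mk : ℝ → ℂ) =ᵐ[volume]
        fun x => gaborCoef b g (f : ℝ → ℂ) mk.1 mk.2 * timeFreqShift b mk.1 mk.2 h x) ∧
      HasSum F f

/-- `F` has a simple discontinuity at `x₀`: both one-sided limits exist but differ. -/
def SimpleDiscontAt (F : ℝ → ℂ) (x₀ : ℝ) : Prop :=
  ∃ l r : ℂ, Tendsto F (𝓝[<] x₀) (𝓝 l) ∧ Tendsto F (𝓝[>] x₀) (𝓝 r) ∧ l ≠ r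

/-- `f` is piecewise `C^{n+1}` with seam points contained in the finite set `s`:
`f` is `C^{n+1}` off `s`, and at each point of `s` the one-sided limits of the
`(n+1)`-st derivative exist. -/
def PiecewiseCn1 (n : ℕ) (f : ℝ → ℂ) (s : Finset ℝ) : Prop :=
  (∀ y : ℝ, y ∉ s → ContDiffAt ℝ (n + 1) f y) ∧
  ∀ y ∈ s, (∃ l, Tendsto (iteratedDeriv (n + 1) f) (𝓝[<] y) (𝓝 l)) ∧
           (∃ r, Tendsto (iteratedDeriv (n + 1) f) (𝓝[>] y) (𝓝 r))

/-!
For `x ≥ 0` in a piece `[k/b, k+1]` of the support of `h_z` (with `[0,1]` as the piece `k = 0`),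
`h_z(x)` and `h_z(-x)` are the conjugates of `γ_k(x)` and `η_k(-x)`. For even `g` one has
`ψ(1 - x) = ψ(x)`, and `γ_k(x) - η_k(-x)` is a multiple of `z(x-k) + z(1-(x-k))`, the multiple being
`g(x-1) ≠ 0` when `k = 0`; off the pieces both values vanish. Hence `h_z` is even a.e. iff
`z(y) = -z(1-y)` for a.e. `y ∈ [0,1]`. On `[0, 1 - N(1/b-1)]` and `[N(1/b-1), 1]` the explicit
formulas for `z` satisfy this identity, and it is symmetric under `y ↦ 1 - y`, so only
`(1 - N(1/b-1), 1/2]` remains.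
-/

section SmallSupport

variable {b : ℝ} {g z : ℝ → ℂ}

theorem psiFun_add_one (x : ℝ) : psiFun g (x + 1) = psiFun g x := by
  rw [psiFun, psiFun, ← (Equiv.addRight (1 : ℤ)).tsum_eq (fun n : ℤ => g (x + n))]
  refine congrArg _ (tsum_congr fun n => ?_)
  push_cast [Equiv.coe_addRight]
  ring_nf

theorem psiFun_neg (hg : ∀ x, g x = g (-x)) (x : ℝ) : psiFun g (-x) = psiFun g x := by
  rw [psiFun, psiFun, ← (Equiv.neg ℤ).tsum_eq (fun n : ℤ => g (x + n))]
  refine congrArg _ (tsum_congr fun n => ?_)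
  rw [hg]
  push_cast [Equiv.neg_apply]
  ring_nf

theorem psiFun_one_sub (hg : ∀ x, g x = g (-x)) (x : ℝ) : psiFun g (1 - x) = psiFun g x := by
  rw [sub_eq_neg_add, psiFun_add_one, psiFun_neg hg]

theorem gammaAux_sub_etaAux_neg (hg : ∀ x, g x = g (-x)) (k : ℕ) (x : ℝ) :
    gammaAux b g z k x - etaAux b g z k (-x) =
      (-1) ^ k * (∏ j ∈ Finset.Icc 1 k,
        g (x - k - 1 - j * (1 / b - 1)) / g (x - k - j * (1 / b - 1))) *
        g (x - k - 1) * (z (x - k) + z (1 - (x - k))) := by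
  have hreflect : ∀ y y', y' = -y → g y' = g y := fun y _ h => h ▸ (hg y).symm
  have hprod : ∀ j : ℕ, g (-x + k + 1 + j * (1 / b - 1)) / g (-x + k + j * (1 / b - 1)) =
      g (x - k - 1 - j * (1 / b - 1)) / g (x - k - j * (1 / b - 1)) := fun j => by
    rw [hreflect (x - k - 1 - j * (1 / b - 1)) _ (by ring),
      hreflect (x - k - j * (1 / b - 1)) (-x + k + j * (1 / b - 1)) (by ring)]
  simp only [gammaAux, etaAux, hprod]
  rw [show -x + k + 1 = 1 - (x - k) by ring, psiFun_one_sub hg,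
    hreflect (x - k - 1) (1 - (x - k)) (by ring)]
  ring

theorem hz_of_mem_Icc_zero_one {x : ℝ} (hx : x ∈ Icc (0 : ℝ) 1) :
    hz b g z x = starRingEnd ℂ (gammaAux b g z 0 x) := by
  rw [hz, if_neg fun h => (not_le.2 h.2) hx.1, if_pos hx]

theorem hz_neg_of_mem_Ioc_zero_one {x : ℝ} (hx : x ∈ Ioc (0 : ℝ) 1) :
    hz b g z (-x) = starRingEnd ℂ (etaAux b g z 0 (-x)) := by
  rw [hz, if_pos ⟨neg_le_neg hx.2, neg_neg_of_pos hx.1⟩]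

theorem lt_of_mem_Icc_div (hb0 : 0 < b) (hb1 : b < 1) {k : ℕ} (hk : 1 ≤ k) {x : ℝ}
    (hx : x ∈ Icc ((k : ℝ) / b) (k + 1)) : (k : ℝ) < x := by
  have hk' : (1 : ℝ) ≤ k := by exact_mod_cast hk
  refine lt_of_lt_of_le ?_ hx.1
  rw [lt_div_iff₀ hb0]
  nlinarith

theorem piece_index_unique (hb0 : 0 < b) (hb1 : b < 1) {k k' : ℕ} (hk : 1 ≤ k) (hk' : 1 ≤ k')
    {x : ℝ} (h : x ∈ Icc ((k : ℝ) / b) (k + 1)) (h' : x ∈ Icc ((k' : ℝ) / b) (k' + 1)) :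
    k = k' := by
  have hlt : (k : ℝ) < k' + 1 := (lt_of_mem_Icc_div hb0 hb1 hk h).trans_le h'.2
  have hlt' : (k' : ℝ) < k + 1 := (lt_of_mem_Icc_div hb0 hb1 hk' h').trans_le h.2
  norm_cast at hlt hlt'
  omega

theorem neg_mem_Icc_neg_iff {k : ℕ} {x : ℝ} :
    -x ∈ Icc (-(k : ℝ) - 1) (-(k : ℝ) / b) ↔ x ∈ Icc ((k : ℝ) / b) (k + 1) := by
  rw [neg_div]
  constructor <;> rintro ⟨h1, h2⟩ <;> constructor <;> linarith

theorem hz_of_mem_Icc_div (hb0 : 0 < b) (hb1 : b < 1) {k : ℕ} (hk1 : 1 ≤ k) (hk2 : k ≤ kmax b)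
    {x : ℝ} (hx : x ∈ Icc ((k : ℝ) / b) (k + 1)) :
    hz b g z x = starRingEnd ℂ (gammaAux b g z k x) := by
  have hx1 : 1 < x := (Nat.one_le_cast.2 hk1).trans_lt (lt_of_mem_Icc_div hb0 hb1 hk1 hx)
  have hex : ∃ k' : ℕ, 1 ≤ k' ∧ k' ≤ kmax b ∧ x ∈ Icc ((k' : ℝ) / b) (k' + 1) :=
    ⟨k, hk1, hk2, hx⟩
  rw [hz, if_neg fun h => by linarith [h.2], if_neg fun h => by linarith [h.2], dif_pos hex,
    piece_index_unique hb0 hb1 hex.choose_spec.1 hk1 hex.choose_spec.2.2 hx]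

theorem hz_neg_of_mem_Icc_div (hb0 : 0 < b) (hb1 : b < 1) {k : ℕ} (hk1 : 1 ≤ k)
    (hk2 : k ≤ kmax b) {x : ℝ} (hx : x ∈ Icc ((k : ℝ) / b) (k + 1)) :
    hz b g z (-x) = starRingEnd ℂ (etaAux b g z k (-x)) := by
  have hx1 : 1 < x := (Nat.one_le_cast.2 hk1).trans_lt (lt_of_mem_Icc_div hb0 hb1 hk1 hx)
  have hex : ∃ k' : ℕ, 1 ≤ k' ∧ k' ≤ kmax b ∧ -x ∈ Icc (-(k' : ℝ) - 1) (-(k' : ℝ) / b) :=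
    ⟨k, hk1, hk2, neg_mem_Icc_neg_iff.2 hx⟩
  rw [hz, if_neg fun h => by linarith [h.1], if_neg fun h => by linarith [h.1],
    dif_neg fun ⟨k', hk', _, h⟩ => by linarith [lt_of_mem_Icc_div hb0 hb1 hk' h], dif_pos hex,
    piece_index_unique hb0 hb1 hex.choose_spec.1 hk1
      (neg_mem_Icc_neg_iff.1 hex.choose_spec.2.2) hx]

theorem hz_eq_zero_and_hz_neg_eq_zero (hb0 : 0 < b) {x : ℝ} (hx1 : 1 < x)
    (hgap : ∀ k : ℕ, 1 ≤ k → k ≤ kmax b → x ∉ Icc ((k : ℝ) / b) (k + 1)) :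
    hz b g z x = 0 ∧ hz b g z (-x) = 0 := by
  have hdiv : ∀ k : ℕ, 0 ≤ (k : ℝ) / b := fun k => by positivity
  constructor
  · rw [hz, if_neg fun h => by linarith [h.2], if_neg fun h => by linarith [h.2],
      dif_neg fun ⟨k, hk1, hk2, h⟩ => hgap k hk1 hk2 h,
      dif_neg fun ⟨k, _, _, h⟩ => by linarith [neg_mem_Icc_neg_iff.1 (neg_neg x ▸ h) |>.1, hdiv k],
      map_zero]
  · rw [hz, if_neg fun h => by linarith [h.1], if_neg fun h => by linarith [h.1],
      dif_neg fun ⟨k, _, _, h⟩ => by linarith [h.1, hdiv k],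
      dif_neg fun ⟨k, hk1, hk2, h⟩ => hgap k hk1 hk2 (neg_mem_Icc_neg_iff.1 h), map_zero]

theorem hz_eq_hz_neg_of_pos (hb0 : 0 < b) (hb1 : b < 1) (hg : ∀ x, g x = g (-x)) {x : ℝ}
    (hx : 0 < x) (hanti : ∀ k : ℕ, x - k ∈ Icc (0 : ℝ) 1 → z (x - k) = -z (1 - (x - k))) :
    hz b g z x = hz b g z (-x) := by
  have hpiece : ∀ k : ℕ, x - k ∈ Icc (0 : ℝ) 1 → gammaAux b g z k x = etaAux b g z k (-x) :=
    fun k hk => by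
      rw [← sub_eq_zero, gammaAux_sub_etaAux_neg hg, hanti k hk, neg_add_cancel, mul_zero]
  rcases le_or_gt x 1 with hx1 | hx1
  · rw [hz_of_mem_Icc_zero_one ⟨hx.le, hx1⟩, hz_neg_of_mem_Ioc_zero_one ⟨hx, hx1⟩,
      hpiece 0 (by simpa using And.intro hx.le hx1)]
  by_cases hmem : ∃ k : ℕ, 1 ≤ k ∧ k ≤ kmax b ∧ x ∈ Icc ((k : ℝ) / b) (k + 1)
  · obtain ⟨k, hk1, hk2, hxk⟩ := hmem
    have hkx := lt_of_mem_Icc_div hb0 hb1 hk1 hxk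
    rw [hz_of_mem_Icc_div hb0 hb1 hk1 hk2 hxk, hz_neg_of_mem_Icc_div hb0 hb1 hk1 hk2 hxk,
      hpiece k ⟨by linarith, by linarith [hxk.2]⟩]
  · push Not at hmem
    obtain ⟨hzero, hzero_neg⟩ := hz_eq_zero_and_hz_neg_eq_zero (z := z) hb0 hx1 hmem
    rw [hzero, hzero_neg]

theorem ae_hz_eq_hz_neg (hb0 : 0 < b) (hb1 : b < 1) (hg : ∀ x, g x = g (-x))
    (hanti : ∀ᵐ y, y ∈ Icc (0 : ℝ) 1 → z y = -z (1 - y)) :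
    ∀ᵐ x, hz b g z x = hz b g z (-x) := by
  have hshift : ∀ᵐ x : ℝ, ∀ k : ℕ, x - k ∈ Icc (0 : ℝ) 1 → z (x - k) = -z (1 - (x - k)) :=
    ae_all_iff.2 fun k => (measurePreserving_sub_right volume (k : ℝ)).quasiMeasurePreserving.ae hanti
  have hshift_neg := (Measure.measurePreserving_neg (volume : Measure ℝ)).quasiMeasurePreserving.ae hshift
  filter_upwards [hshift, hshift_neg] with x h h'
  rcases lt_trichotomy x 0 with hx | rfl | hx
  · simpa using (hz_eq_hz_neg_of_pos hb0 hb1 hg (neg_pos.2 hx) h').symm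
  · rw [neg_zero]
  · exact hz_eq_hz_neg_of_pos hb0 hb1 hg hx h

theorem antisymm_of_mem_Icc_zero_one_sub {d : ℝ} (hg : ∀ x, g x = g (-x))
    (hz1 : ∀ x ∈ Icc (0 : ℝ) (1 - d), z x = (b : ℂ) * psiFun g x / g x)
    (hz3 : ∀ x ∈ Icc d 1, z x = -((b : ℂ) * psiFun g x / g (x - 1)))
    {x : ℝ} (hx : x ∈ Icc (0 : ℝ) (1 - d)) : z x = -z (1 - x) := by
  rw [hz1 x hx, hz3 (1 - x) ⟨by linarith [hx.2], by linarith [hx.1]⟩, psiFun_one_sub hg,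
    show 1 - x - 1 = -x by ring, ← hg, neg_neg]

theorem ae_antisymm_of_ae_Ioc {d : ℝ} (hg : ∀ x, g x = g (-x))
    (hz1 : ∀ x ∈ Icc (0 : ℝ) (1 - d), z x = (b : ℂ) * psiFun g x / g x)
    (hz3 : ∀ x ∈ Icc d 1, z x = -((b : ℂ) * psiFun g x / g (x - 1)))
    (hmid : ∀ᵐ x ∂volume.restrict (Ioc (1 - d) (1 / 2)), z x = -z (1 - x)) :
    ∀ᵐ x, x ∈ Icc (0 : ℝ) 1 → z x = -z (1 - x) := by
  have hmid' := (ae_restrict_iff' measurableSet_Ioc).1 hmid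
  have hmid_refl :=
    (Measure.measurePreserving_sub_left (volume : Measure ℝ) 1).quasiMeasurePreserving.ae hmid'
  have hflip : ∀ {x : ℝ}, z (1 - x) = -z (1 - (1 - x)) → z x = -z (1 - x) := fun h => by
    rw [h, sub_sub_cancel, neg_neg]
  filter_upwards [hmid', hmid_refl] with x h h' hx
  rcases le_or_gt x (1 - d) with hl | hl
  · exact antisymm_of_mem_Icc_zero_one_sub hg hz1 hz3 ⟨hx.1, hl⟩
  rcases le_or_gt d x with hr | hr
  · exact hflip (antisymm_of_mem_Icc_zero_one_sub hg hz1 hz3 ⟨by linarith [hx.2], by linarith⟩)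
  rcases le_or_gt x (1 / 2) with hh | hh
  · exact h ⟨hl, hh⟩
  · exact hflip (h' ⟨by linarith, by linarith⟩)

theorem antisymm_of_hz_eq_hz_neg {n : ℕ} (hgV : Vplus n g) (hg : ∀ x, g x = g (-x)) {x : ℝ}
    (hx : x ∈ Ioo (0 : ℝ) 1) (h : hz b g z x = hz b g z (-x)) : z x = -z (1 - x) := by
  rw [hz_of_mem_Icc_zero_one (Ioo_subset_Icc_self hx),
    hz_neg_of_mem_Ioc_zero_one (Ioo_subset_Ioc_self hx)] at h
  have hdiff := gammaAux_sub_etaAux_neg (b := b) (z := z) hg 0 x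
  rw [(starRingEnd ℂ).injective h, sub_self] at hdiff
  simp only [pow_zero, Finset.Icc_eq_empty_of_lt zero_lt_one, Finset.prod_empty, one_mul,
    Nat.cast_zero, sub_zero] at hdiff
  have hg0 : g (x - 1) ≠ 0 := hgV.2.2 _ ⟨by linarith [hx.1], by linarith [hx.2]⟩
  exact eq_neg_of_add_eq_zero_left ((mul_eq_zero.1 hdiff.symm).resolve_left hg0)

end SmallSupport

theorem mem_Ioo_zero_one_of_mem_Ico {N : ℕ} (hN : 0 < N) {b : ℝ}
    (hb : b ∈ Ico ((N : ℝ) / (N + 1)) (2 * N / (2 * N + 1))) : b ∈ Ioo (0 : ℝ) 1 := by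
  have hN' : (0 : ℝ) < N := by exact_mod_cast hN
  refine ⟨(by positivity : (0 : ℝ) < N / (N + 1)).trans_le hb.1, hb.2.trans ?_⟩
  rw [div_lt_one (by positivity)]
  linarith

theorem mul_one_div_sub_one_le_one {N : ℕ} {b : ℝ} (hb0 : 0 < b)
    (hb : (N : ℝ) / (N + 1) ≤ b) : (N : ℝ) * (1 / b - 1) ≤ 1 := by
  rw [div_le_iff₀ (by positivity)] at hb
  rw [mul_sub, mul_one, mul_one_div, sub_le_iff_le_add, div_le_iff₀ hb0]
  linarith

theorem statement17_general (n : ℕ) (N : ℕ) (hN : 0 < N) (b : ℝ)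
    (hb : b ∈ Set.Ico ((N : ℝ) / ((N : ℝ) + 1)) ((2 * (N : ℝ)) / (2 * (N : ℝ) + 1)))
    (g : ℝ → ℂ) (hg : Vplus n g) (hgeven : ∀ x : ℝ, g x = g (-x))
    (z : ℝ → ℂ)
    (hz1 : ∀ x ∈ Set.Icc (0 : ℝ) (1 - (N : ℝ) * (1 / b - 1)),
      z x = (b : ℂ) * psiFun g x / g x)
    (hz3 : ∀ x ∈ Set.Icc ((N : ℝ) * (1 / b - 1)) 1,
      z x = -((b : ℂ) * psiFun g x / g (x - 1))) :
    (∀ᵐ x : ℝ, hz b g z x = hz b g z (-x)) ↔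
      (∀ᵐ x ∂((volume : Measure ℝ).restrict
          (Set.Ioc (1 - (N : ℝ) * (1 / b - 1)) (1 / 2))),
        z x = -z (1 - x)) := by
  obtain ⟨hb0, hb1⟩ := mem_Ioo_zero_one_of_mem_Ico hN hb
  have hd := mul_one_div_sub_one_le_one hb0 hb.1
  constructor
  · intro hsymm
    rw [ae_restrict_iff' measurableSet_Ioc]
    filter_upwards [hsymm] with x hx hmem
    exact antisymm_of_hz_eq_hz_neg hg hgeven ⟨by linarith [hmem.1], by linarith [hmem.2]⟩ hx
  · intro hmid
    exact ae_hz_eq_hz_neg hb0 hb1 hgeven (ae_antisymm_of_ae_Ioc hgeven hz1 hz3 hmid)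

/-- **Small support, part (c).** -/
theorem statement17 (n : ℕ) (N : ℕ) (hN : 0 < N) (b : ℝ)
    (hb : b ∈ Set.Ico ((N : ℝ) / ((N : ℝ) + 1)) ((2 * (N : ℝ)) / (2 * (N : ℝ) + 1)))
    (g : ℝ → ℂ) (hg : Vplus n g) (hgeven : ∀ x : ℝ, g x = g (-x))
    (z : ℝ → ℂ) (hzmeas : Measurable z)
    (hz1 : ∀ x ∈ Set.Icc (0 : ℝ) (1 - (N : ℝ) * (1 / b - 1)),
      z x = (b : ℂ) * psiFun g x / g x)
    (hz3 : ∀ x ∈ Set.Icc ((N : ℝ) * (1 / b - 1)) 1,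
      z x = -((b : ℂ) * psiFun g x / g (x - 1))) :
    (∀ᵐ x : ℝ, hz b g z x = hz b g z (-x)) ↔
      (∀ᵐ x ∂((volume : Measure ℝ).restrict
          (Set.Ioc (1 - (N : ℝ) * (1 / b - 1)) (1 / 2))),
        z x = -z (1 - x)) :=
  statement17_general n N hN b hb g hg hgeven z hz1 hz3

end
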